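/- The number of leaves of the exponential of the game (n : {m : ()}) (the opponent game with n identical children, each a player game with m copies of the empty opponent game) is n!·m^n, for n, m ≥ 1. -/

import Mathlib

/-!
In `O ⊗ O'` a play interleaves whole rounds (an opponent move and the player's reply in the same
component) of `O` and of `O'`. If every maximal play of `O` has exactly `a` rounds, every maximal
play of `O'` exactly `b`, and the player is never stuck, then a maximal play of `O ⊗ O'` is a pair
of maximal plays together with one of the `C(a + b, a)` shuffles of their rounds. The exponential
of `(n : {m : ()})` is the `n`-fold tensor power of the one-round game `(1 : {m : ()})`, which has
`m` leaves, so its leaves number `2 · 3 ⋯ n · mⁿ = n! · mⁿ`.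
-/

/-- Rose trees: the unlabeled shape of a game tree. -/
inductive RTree : Type where
  | node : List RTree → RTree

mutual
/-- An opponent game: a finite list of player games (its children). -/
inductive OGame : Type where
  | mk : List PGame → OGame
/-- A player game: a finite list of opponent games (its children). -/
inductive PGame : Type where
  | mk : List OGame → PGame
end

mutual
/-- The dual of an opponent game. -/
def OGame.dual : OGame → PGame
  | .mk ps => .mk (ps.attach.map fun ⟨p, _⟩ => p.dual)
/-- The dual of a player game. -/
def PGame.dual : PGame → OGame
  | .mk os => .mk (os.attach.map fun ⟨o, _⟩ => o.dual)
end

mutual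
/-- Strategy existence in an opponent game: a conjunction over children. -/
def OGame.strat : OGame → Bool
  | .mk ps => ps.attach.all fun ⟨p, _⟩ => p.strat
/-- Strategy existence in a player game: a disjunction over children. -/
def PGame.strat : PGame → Bool
  | .mk os => os.attach.any fun ⟨o, _⟩ => o.strat
end

mutual
/-- Tensor of opponent games: `O ⊗ O' = (P_i ⊗ˡ O', O ⊗ʳ P'_k | …)`. -/
def otimes : OGame → OGame → OGame
  | .mk ps, .mk qs => .mk ((ps.attach.map fun ⟨p, _⟩ => oxl p (.mk qs)) ++
      (qs.attach.map fun ⟨q, _⟩ => oxr (.mk ps) q))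
  termination_by o o' => sizeOf o + sizeOf o'
  decreasing_by
  · have := List.sizeOf_lt_of_mem ‹p ∈ ps›; simp_all; omega
  · have := List.sizeOf_lt_of_mem ‹q ∈ qs›; simp_all; omega
/-- Mixed tensor `O ⊗ʳ P = {O ⊗ O_j | j ∈ J}`. -/
def oxr : OGame → PGame → PGame
  | o, .mk os => .mk (os.attach.map fun ⟨oj, _⟩ => otimes o oj)
  termination_by o p => sizeOf o + sizeOf p
  decreasing_by
  · have := List.sizeOf_lt_of_mem ‹oj ∈ os›; simp_all; omega
/-- Mixed tensor `P ⊗ˡ O = {O_j ⊗ O | j ∈ J}`. -/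
def oxl : PGame → OGame → PGame
  | .mk os, o => .mk (os.attach.map fun ⟨oj, _⟩ => otimes oj o)
  termination_by p o => sizeOf p + sizeOf o
  decreasing_by
  · have := List.sizeOf_lt_of_mem ‹oj ∈ os›; simp_all; omega
end

mutual
/-- Par of player games: `P ⅋ P' = {O_j ⅋ˡ P', P ⅋ʳ O'_k | …}`. -/
def parr : PGame → PGame → PGame
  | .mk os, .mk qs => .mk ((os.attach.map fun ⟨o, _⟩ => parrOP o (.mk qs)) ++
      (qs.attach.map fun ⟨q, _⟩ => parrPO (.mk os) q))
  termination_by p p' => sizeOf p + sizeOf p'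
  decreasing_by
  · have := List.sizeOf_lt_of_mem ‹o ∈ os›; simp_all; omega
  · have := List.sizeOf_lt_of_mem ‹q ∈ qs›; simp_all; omega
/-- Mixed par `P ⅋ʳ O = (P ⅋ P_i | i ∈ I)`. -/
def parrPO : PGame → OGame → OGame
  | p, .mk ps => .mk (ps.attach.map fun ⟨pi, _⟩ => parr p pi)
  termination_by p o => sizeOf p + sizeOf o
  decreasing_by
  · have := List.sizeOf_lt_of_mem ‹pi ∈ ps›; simp_all; omega
/-- Mixed par `O ⅋ˡ P = (P_i ⅋ P | i ∈ I)`. -/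
def parrOP : OGame → PGame → OGame
  | .mk ps, p => .mk (ps.attach.map fun ⟨pi, _⟩ => parr pi p)
  termination_by o p => sizeOf o + sizeOf p
  decreasing_by
  · have := List.sizeOf_lt_of_mem ‹pi ∈ ps›; simp_all; omega
end

mutual
/-- The exponential `!O`: `!() = ()` and `!O = ⊗_{i∈I} (b_i : !'P_i)` for `I ≠ ∅`. -/
def bang : OGame → OGame
  | .mk [] => .mk []
  | .mk (p :: ps) =>
      (ps.attach.map fun ⟨q, _⟩ => OGame.mk [bang' q]).foldl otimes (OGame.mk [bang' p])
/-- The auxiliary exponential `!'{a_j : O_j} = {a_j : !O_j}`. -/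
def bang' : PGame → PGame
  | .mk os => .mk (os.attach.map fun ⟨o, _⟩ => bang o)
end

mutual
/-- Underlying unlabeled tree of an opponent game. -/
def OGame.toTree : OGame → RTree
  | .mk ps => .node (ps.attach.map fun ⟨p, _⟩ => p.toTree)
/-- Underlying unlabeled tree of a player game. -/
def PGame.toTree : PGame → RTree
  | .mk os => .node (os.attach.map fun ⟨o, _⟩ => o.toTree)
end

/-- Number of nodes (including the root). -/
def RTree.nodes : RTree → ℕ
  | .node cs => 1 + (cs.attach.map fun ⟨c, _⟩ => c.nodes).sum

/-- Number of parent-child edges. -/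
def RTree.edges : RTree → ℕ
  | .node cs => cs.length + (cs.attach.map fun ⟨c, _⟩ => c.edges).sum

/-- Number of leaves. -/
def RTree.leaves : RTree → ℕ
  | .node [] => 1
  | .node cs => (cs.attach.map fun ⟨c, _⟩ => c.leaves).sum

/-- Uniform size: `u[leaf] = 0`, `u[node with n children] = (n-1) + Σ u[child]`. -/
def RTree.usize : RTree → ℕ
  | .node [] => 0
  | .node cs => (cs.length - 1) + (cs.attach.map fun ⟨c, _⟩ => c.usize).sum

/-- Depth: leaves have depth 0. -/
def RTree.depth : RTree → ℕ
  | .node cs => (cs.attach.map fun ⟨c, _⟩ => c.depth + 1).foldr max 0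

/-- `profile t k` is the number of nodes of `t` at depth `k`. -/
def RTree.profile : RTree → ℕ → ℕ
  | _, 0 => 1
  | .node cs, k + 1 => (cs.attach.map fun ⟨c, _⟩ => c.profile k).sum

mutual
/-- Number of player nodes of an opponent game. -/
def OGame.pnodes : OGame → ℕ
  | .mk ps => (ps.attach.map fun ⟨p, _⟩ => p.pnodes).sum
/-- Number of player nodes of a player game (the root counts). -/
def PGame.pnodes : PGame → ℕ
  | .mk os => 1 + (os.attach.map fun ⟨o, _⟩ => o.pnodes).sum
end

mutual
/-- Number of edges leaving opponent nodes, for an opponent game. -/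
def OGame.eo : OGame → ℕ
  | .mk ps => ps.length + (ps.attach.map fun ⟨p, _⟩ => p.eo).sum
/-- Number of edges leaving opponent nodes, for a player game. -/
def PGame.eo : PGame → ℕ
  | .mk os => (os.attach.map fun ⟨o, _⟩ => o.eo).sum
end

mutual
/-- Number of edges leaving player nodes, for an opponent game. -/
def OGame.ep : OGame → ℕ
  | .mk ps => (ps.attach.map fun ⟨p, _⟩ => p.ep).sum
/-- Number of edges leaving player nodes, for a player game. -/
def PGame.ep : PGame → ℕ
  | .mk os => os.length + (os.attach.map fun ⟨o, _⟩ => o.ep).sum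
end

/-- `γ(i,j) = 1` if `i` or `j` is zero or even, else `0`. -/
def gammaCoef (i j : ℕ) : ℕ :=
  if i = 0 ∨ j = 0 ∨ i % 2 = 0 ∨ j % 2 = 0 then 1 else 0

mutual
/-- The single-branch player chain `L_n`. -/
def Lp : ℕ → PGame
  | 0 => .mk []
  | n + 1 => .mk [Lo n]
/-- The single-branch opponent chain `L'_n`. -/
def Lo : ℕ → OGame
  | 0 => .mk []
  | n + 1 => .mk [Lp n]
end

theorem otimes_mk (ps qs : List PGame) :
    otimes (.mk ps) (.mk qs) = .mk (ps.map (oxl · (.mk qs)) ++ qs.map (oxr (.mk ps) ·)) := by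
  rw [otimes]; simp

theorem oxl_mk (os : List OGame) (o : OGame) : oxl (.mk os) o = .mk (os.map (otimes · o)) := by
  rw [oxl]; simp

theorem oxr_mk (o : OGame) (os : List OGame) : oxr o (.mk os) = .mk (os.map (otimes o ·)) := by
  rw [oxr]; simp

theorem OGame.toTree_mk (ps : List PGame) :
    (OGame.mk ps).toTree = .node (ps.map PGame.toTree) := by
  rw [OGame.toTree]; simp

theorem PGame.toTree_mk (os : List OGame) :
    (PGame.mk os).toTree = .node (os.map OGame.toTree) := by
  rw [PGame.toTree]; simp

theorem RTree.leaves_node {cs : List RTree} (h : cs ≠ []) :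
    (RTree.node cs).leaves = (cs.map leaves).sum := by
  cases cs with
  | nil => exact absurd rfl h
  | cons c cs => rw [RTree.leaves] <;> simp

theorem bang_nil : bang (.mk []) = .mk [] := by
  rw [bang]

theorem bang_cons (p : PGame) (ps : List PGame) :
    bang (.mk (p :: ps)) = (ps.map fun q => OGame.mk [bang' q]).foldl otimes (.mk [bang' p]) := by
  rw [bang]; simp

theorem bang'_mk (os : List OGame) : bang' (.mk os) = .mk (os.map bang) := by
  rw [bang']; simp

theorem OGame.leaves_mk_nil : (OGame.mk []).toTree.leaves = 1 := by
  rw [OGame.toTree_mk, List.map_nil, RTree.leaves]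

theorem OGame.leaves_mk {ps : List PGame} (h : ps ≠ []) :
    (OGame.mk ps).toTree.leaves = (ps.map fun p => p.toTree.leaves).sum := by
  rw [OGame.toTree_mk, RTree.leaves_node (by simpa), List.map_map]; rfl

theorem PGame.leaves_mk {os : List OGame} (h : os ≠ []) :
    (PGame.mk os).toTree.leaves = (os.map fun o => o.toTree.leaves).sum := by
  rw [PGame.toTree_mk, RTree.leaves_node (by simpa), List.map_map]; rfl

mutual
/-- `o.Uniform a`: every maximal play of `o` has exactly `a` rounds, and the player always has a
move. -/
inductive OGame.Uniform : OGame → ℕ → Prop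
  | nil : OGame.Uniform (.mk []) 0
  | mk {ps : List PGame} {a : ℕ} :
      ps ≠ [] → (∀ p ∈ ps, PGame.Uniform p a) → OGame.Uniform (.mk ps) (a + 1)
inductive PGame.Uniform : PGame → ℕ → Prop
  | mk {os : List OGame} {a : ℕ} :
      os ≠ [] → (∀ o ∈ os, OGame.Uniform o a) → PGame.Uniform (.mk os) a
end

mutual
theorem OGame.Uniform.otimes {a b : ℕ} {o o' : OGame} (h : o.Uniform a) (h' : o'.Uniform b) :
    (otimes o o').Uniform (a + b) := by
  rcases h with _ | @⟨ps, a, hps, hp⟩ <;> rcases h' with _ | @⟨qs, b, hqs, hq⟩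
  · rw [otimes_mk]; exact .nil
  · rw [otimes_mk, List.map_nil, List.nil_append, Nat.zero_add]
    refine .mk (by simpa) fun _ hx => ?_
    obtain ⟨q, hq', rfl⟩ := List.mem_map.1 hx
    simpa using OGame.Uniform.nil.oxr (hq q hq')
  · rw [otimes_mk, List.map_nil, List.append_nil, Nat.add_zero]
    refine .mk (by simpa) fun _ hx => ?_
    obtain ⟨p, hp', rfl⟩ := List.mem_map.1 hx
    simpa using (hp p hp').oxl OGame.Uniform.nil
  · rw [otimes_mk, show a + 1 + (b + 1) = a + (b + 1) + 1 by omega]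
    refine .mk (by simp [hps]) fun _ hx => ?_
    rcases List.mem_append.1 hx with hx | hx
    · obtain ⟨p, hp', rfl⟩ := List.mem_map.1 hx
      exact (hp p hp').oxl (.mk hqs hq)
    · obtain ⟨q, hq', rfl⟩ := List.mem_map.1 hx
      rw [show a + (b + 1) = a + 1 + b by omega]
      exact (OGame.Uniform.mk hps hp).oxr (hq q hq')
termination_by 2 * (a + b)

theorem PGame.Uniform.oxl {a b : ℕ} {p : PGame} {o : OGame} (h : p.Uniform a)
    (h' : o.Uniform b) :
    (oxl p o).Uniform (a + b) := by
  rcases h with ⟨hos, ho⟩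
  rw [oxl_mk]
  refine .mk (by simpa) fun _ hx => ?_
  obtain ⟨o, ho', rfl⟩ := List.mem_map.1 hx
  exact (ho o ho').otimes h'
termination_by 2 * (a + b) + 1

theorem OGame.Uniform.oxr {a b : ℕ} {o : OGame} {p : PGame} (h : o.Uniform a)
    (h' : p.Uniform b) :
    (oxr o p).Uniform (a + b) := by
  rcases h' with ⟨hos, ho⟩
  rw [oxr_mk]
  refine .mk (by simpa) fun _ hx => ?_
  obtain ⟨o', ho', rfl⟩ := List.mem_map.1 hx
  exact h.otimes (ho o' ho')
termination_by 2 * (a + b) + 1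
end

mutual
theorem OGame.Uniform.leaves_otimes {a b : ℕ} {o o' : OGame} (h : o.Uniform a)
    (h' : o'.Uniform b) :
    (otimes o o').toTree.leaves = (a + b).choose a * (o.toTree.leaves * o'.toTree.leaves) := by
  rcases h with _ | @⟨ps, a, hps, hp⟩ <;> rcases h' with _ | @⟨qs, b, hqs, hq⟩
  · rw [otimes_mk, List.map_nil, List.map_nil, List.nil_append, OGame.leaves_mk_nil]
    rfl
  · rw [otimes_mk, List.map_nil, List.nil_append, OGame.leaves_mk (by simpa),
      OGame.leaves_mk hqs, List.map_map, OGame.leaves_mk_nil]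
    simp only [Nat.zero_add, Nat.choose_zero_right, one_mul, Function.comp_def]
    refine congrArg List.sum (List.map_congr_left fun q hq' => ?_)
    simpa [OGame.leaves_mk_nil] using OGame.Uniform.nil.leaves_oxr (hq q hq')
  · rw [otimes_mk, List.map_nil, List.append_nil, OGame.leaves_mk (by simpa),
      OGame.leaves_mk hps, List.map_map, OGame.leaves_mk_nil]
    simp only [Nat.add_zero, Nat.choose_self, one_mul, mul_one, Function.comp_def]
    refine congrArg List.sum (List.map_congr_left fun p hp' => ?_)
    simpa [OGame.leaves_mk_nil] using (hp p hp').leaves_oxl OGame.Uniform.nil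
  · have hO : (OGame.mk ps).Uniform (a + 1) := .mk hps hp
    have hO' : (OGame.mk qs).Uniform (b + 1) := .mk hqs hq
    calc (otimes (.mk ps) (.mk qs)).toTree.leaves
        = (ps.map fun p => (oxl p (.mk qs)).toTree.leaves).sum +
            (qs.map fun q => (oxr (.mk ps) q).toTree.leaves).sum := by
          rw [otimes_mk, OGame.leaves_mk (by simp [hps]), List.map_append, List.sum_append,
            List.map_map, List.map_map]
          rfl
      _ = (ps.map fun p => (a + (b + 1)).choose a *
              (p.toTree.leaves * (OGame.mk qs).toTree.leaves)).sum +
            (qs.map fun q => (a + 1 + b).choose (a + 1) *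
              ((OGame.mk ps).toTree.leaves * q.toTree.leaves)).sum := by
          congr 1 <;> refine congrArg List.sum (List.map_congr_left fun x hx => ?_)
          · exact (hp x hx).leaves_oxl hO'
          · exact hO.leaves_oxr (hq x hx)
      _ = ((a + (b + 1)).choose a + (a + 1 + b).choose (a + 1)) *
            ((OGame.mk ps).toTree.leaves * (OGame.mk qs).toTree.leaves) := by
          simp only [List.sum_map_mul_left, List.sum_map_mul_right, OGame.leaves_mk hps,
            OGame.leaves_mk hqs]
          ring
      _ = _ := by
          rw [show a + 1 + b = a + (b + 1) by omega, ← Nat.choose_succ_succ,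
            show a + 1 + (b + 1) = a + (b + 1) + 1 by omega]
termination_by 2 * (a + b)

theorem PGame.Uniform.leaves_oxl {a b : ℕ} {p : PGame} {o : OGame} (h : p.Uniform a)
    (h' : o.Uniform b) :
    (oxl p o).toTree.leaves = (a + b).choose a * (p.toTree.leaves * o.toTree.leaves) := by
  rcases h with @⟨os, _, hos, ho⟩
  rw [oxl_mk, PGame.leaves_mk (by simpa), PGame.leaves_mk hos, List.map_map,
    ← List.sum_map_mul_right, ← List.sum_map_mul_left]
  exact congrArg List.sum (List.map_congr_left fun o ho' => (ho o ho').leaves_otimes h')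
termination_by 2 * (a + b) + 1

theorem OGame.Uniform.leaves_oxr {a b : ℕ} {o : OGame} {p : PGame} (h : o.Uniform a)
    (h' : p.Uniform b) :
    (oxr o p).toTree.leaves = (a + b).choose a * (o.toTree.leaves * p.toTree.leaves) := by
  rcases h' with @⟨os, _, hos, ho⟩
  rw [oxr_mk, PGame.leaves_mk (by simpa), PGame.leaves_mk hos, List.map_map,
    ← List.sum_map_mul_left, ← List.sum_map_mul_left]
  exact congrArg List.sum (List.map_congr_left fun o' ho' => h.leaves_otimes (ho o' ho'))
termination_by 2 * (a + b) + 1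
end

theorem uniform_foldl_otimes_replicate {g : OGame} {d : ℕ} (hg : g.Uniform d) (k : ℕ) :
    ((List.replicate k g).foldl otimes g).Uniform ((k + 1) * d) := by
  induction k with
  | zero => simpa using hg
  | succ k ih =>
    rw [List.replicate_succ', List.foldl_concat, add_one_mul]
    exact ih.otimes hg

theorem leaves_foldl_otimes_replicate {g : OGame} {d : ℕ} (hg : g.Uniform d) (k : ℕ) :
    ((List.replicate k g).foldl otimes g).toTree.leaves * d.factorial ^ (k + 1) =
      ((k + 1) * d).factorial * g.toTree.leaves ^ (k + 1) := by
  induction k with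
  | zero => simp [mul_comm]
  | succ k ih =>
    rw [List.replicate_succ', List.foldl_concat,
      (uniform_foldl_otimes_replicate hg k).leaves_otimes hg, Nat.choose_symm_add,
      add_one_mul (k + 1), ← Nat.add_choose_mul_factorial_mul_factorial]
    calc _ = ((k + 1) * d + d).choose d * (((List.replicate k g).foldl otimes g).toTree.leaves *
            d.factorial ^ (k + 1)) * d.factorial * g.toTree.leaves := by ring
      _ = _ := by rw [ih]; ring

theorem bang_replicate_succ (p : PGame) (k : ℕ) :
    bang (.mk (List.replicate (k + 1) p)) =
      (List.replicate k (OGame.mk [bang' p])).foldl otimes (.mk [bang' p]) := by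
  rw [List.replicate_succ, bang_cons, List.map_replicate]

theorem bang'_replicate_nil (m : ℕ) :
    bang' (.mk (List.replicate m (.mk []))) = .mk (List.replicate m (.mk [])) := by
  rw [bang'_mk, List.map_replicate, bang_nil]

theorem uniform_singleton_replicate_nil {m : ℕ} (hm : m ≠ 0) :
    (OGame.mk [.mk (List.replicate m (.mk []))]).Uniform 1 := by
  refine .mk (List.cons_ne_nil _ _) fun p hp => ?_
  rw [List.mem_singleton.1 hp]
  exact .mk (by simpa using hm) fun o ho => List.eq_of_mem_replicate ho ▸ .nil

theorem leaves_singleton_replicate_nil {m : ℕ} (hm : m ≠ 0) :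
    (OGame.mk [.mk (List.replicate m (.mk []))]).toTree.leaves = m := by
  rw [OGame.leaves_mk (List.cons_ne_nil _ _), List.map_singleton, List.sum_singleton,
    PGame.leaves_mk (by simpa using hm), List.map_replicate, OGame.leaves_mk_nil,
    List.sum_replicate, smul_eq_mul, mul_one]

/-- leaves[!(n : {m : ()})] = n! · mⁿ for n, m ≥ 1. -/
theorem leaves_bang_rep (n m : ℕ) (hn : 1 ≤ n) (hm : 1 ≤ m) :
    (bang (OGame.mk (List.replicate n
        (PGame.mk (List.replicate m (OGame.mk [])))))).toTree.leaves =
      Nat.factorial n * m ^ n := by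
  obtain ⟨k, rfl⟩ := Nat.exists_eq_add_of_le' hn
  have hg := uniform_singleton_replicate_nil (m := m) (by omega)
  have h := leaves_foldl_otimes_replicate hg k
  rw [leaves_singleton_replicate_nil (by omega), Nat.factorial_one, one_pow, mul_one,
    mul_one] at h
  rw [bang_replicate_succ, bang'_replicate_nil, h]
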